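/- arXiv:1403.3868 — 11 statements merged into one kernel-verified Lean document; each statement's English description precedes it below -/
import Mathlib

section
/- Let G be a finite group. The number of ordered triples (a,b,c) of elements of G satisfying abc = cba equals |G|^2 times the number of conjugacy classes of G. Consequently the probability that abc = cba for uniformly random a,b,c in G equals k(G)/|G|, the same as the commuting probability. -/
/-!
Multiplying `ab · ac⁻¹ = ac⁻¹ · ab` by `ca⁻¹` on the left and by `c` on the right turns
it into `cba = abc`, so `abc = cba` holds exactly when `ab` commutes with `ac⁻¹`. The shear
`(a, b, c) ↦ ((ab, ac⁻¹), a)` is a bijection of `G³`, so a solution is a commuting pair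
together with a free element `a`, and there are `k(G) |G|` commuting pairs.
-/

theorem mul_mul_eq_mul_mul_iff_commute {G : Type*} [Group G] (a b c : G) :
    a * b * c = c * b * a ↔ Commute (a * b) (a * c⁻¹) := by
  calc a * b * c = c * b * a
      ↔ c * a⁻¹ * (a * c⁻¹ * (a * b)) * c = c * a⁻¹ * (a * b * (a * c⁻¹)) * c := by
        simp only [mul_assoc, inv_mul_cancel_left, mul_inv_cancel_left, inv_mul_cancel, mul_one]
    _ ↔ a * b * (a * c⁻¹) = a * c⁻¹ * (a * b) := by
        rw [mul_right_cancel_iff, mul_left_cancel_iff, eq_comm]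

def shearEquiv (G : Type*) [Group G] : G × G × G ≃ (G × G) × G where
  toFun t := ((t.1 * t.2.1, t.1 * t.2.2⁻¹), t.1)
  invFun s := (s.2, s.2⁻¹ * s.1.1, s.1.2⁻¹ * s.2)
  left_inv t := by simp
  right_inv s := by simp

theorem card_mul_mul_eq_mul_mul (G : Type*) [Group G] :
    Nat.card {t : G × G × G // t.1 * t.2.1 * t.2.2 = t.2.2 * t.2.1 * t.1} =
      Nat.card G ^ 2 * Nat.card (ConjClasses G) := by
  calc Nat.card {t : G × G × G // t.1 * t.2.1 * t.2.2 = t.2.2 * t.2.1 * t.1}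
      = Nat.card {s : (G × G) × G // Commute s.1.1 s.1.2} :=
        Nat.card_congr <| (shearEquiv G).subtypeEquiv fun t =>
          mul_mul_eq_mul_mul_iff_commute t.1 t.2.1 t.2.2
    _ = Nat.card {p : G × G // Commute p.1 p.2} * Nat.card G := by
        rw [← Nat.card_prod]
        exact Nat.card_congr <|
          Equiv.prodSubtypeFstEquivSubtypeProd (p := fun p : G × G => Commute p.1 p.2)
    _ = Nat.card G ^ 2 * Nat.card (ConjClasses G) := by
        rw [card_comm_eq_card_conjClasses_mul_card]
        ring

theorem stmt3_general {G : Type*} [Group G] :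
    Nat.card {t : G × G × G // t.1 * t.2.1 * t.2.2 = t.2.2 * t.2.1 * t.1} =
      Nat.card G ^ 2 * Nat.card (ConjClasses G) ∧
    (Nat.card {t : G × G × G // t.1 * t.2.1 * t.2.2 = t.2.2 * t.2.1 * t.1} : ℚ) /
        (Nat.card G) ^ 3 =
      (Nat.card (ConjClasses G) : ℚ) / Nat.card G := by
  refine ⟨card_mul_mul_eq_mul_mul G, ?_⟩
  rw [card_mul_mul_eq_mul_mul G]
  push_cast
  rcases eq_or_ne (Nat.card G : ℚ) 0 with hG | hG
  · simp [hG]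
  · field_simp

theorem stmt3 {G : Type*} [Group G] [Fintype G] :
    Nat.card {t : G × G × G // t.1 * t.2.1 * t.2.2 = t.2.2 * t.2.1 * t.1} =
      Nat.card G ^ 2 * Nat.card (ConjClasses G) ∧
    (Nat.card {t : G × G × G // t.1 * t.2.1 * t.2.2 = t.2.2 * t.2.1 * t.1} : ℚ) /
        (Nat.card G) ^ 3 =
      (Nat.card (ConjClasses G) : ℚ) / Nat.card G :=
  stmt3_general
end

section
/- Let G be a finite group. For every non-identity permutation π of {1,2,3}, the probability that a_1 a_2 a_3 = a_{π(1)} a_{π(2)} a_{π(3)} for uniformly random a_1, a_2, a_3 in G equals k(G)/|G|, where k(G) is the number of conjugacy classes of G. -/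
/-!
For each `π ≠ 1` the equation `a₀ a₁ a₂ = a_{π 0} a_{π 1} a_{π 2}` says that `x` commutes with `y`
for an invertible change of variables `(a₀, a₁, a₂) ↦ (x, y, z)`; for instance `a₀ a₁ a₂ = a₂ a₁ a₀`
holds iff `a₀ a₁` commutes with `a₂ a₀⁻¹`. Hence the number of solutions is `|G|` times the number
of commuting pairs, which is `k(G) |G|`.
-/

open Equiv

theorem Fin.perm_three_ne_one_cases (π : Perm (Fin 3)) (hπ : π ≠ 1) :
    (π 0 = 0 ∧ π 1 = 2 ∧ π 2 = 1) ∨ (π 0 = 1 ∧ π 1 = 0 ∧ π 2 = 2) ∨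
      (π 0 = 1 ∧ π 1 = 2 ∧ π 2 = 0) ∨ (π 0 = 2 ∧ π 1 = 0 ∧ π 2 = 1) ∨
      (π 0 = 2 ∧ π 1 = 1 ∧ π 2 = 0) := by
  revert π
  decide

section CommutingTriples

variable {G : Type*} [Group G]

theorem card_subtype_eq_of_iff_commute {P : (Fin 3 → G) → Prop}
    (f : (Fin 3 → G) → (G × G) × G) (g : (G × G) × G → Fin 3 → G)
    (hgf : Function.LeftInverse g f) (hfg : Function.RightInverse g f)
    (hP : ∀ a, P a ↔ Commute (f a).1.1 (f a).1.2) :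
    Nat.card {a // P a} = Nat.card (ConjClasses G) * Nat.card G * Nat.card G := by
  rw [Nat.card_congr ((Equiv.mk f g hgf hfg).subtypeEquiv (q := fun p => Commute p.1.1 p.1.2) hP),
    Nat.card_congr (prodSubtypeFstEquivSubtypeProd (p := fun p : G × G => Commute p.1 p.2)),
    Nat.card_prod, card_comm_eq_card_conjClasses_mul_card]

theorem card_mul_mul_eq_swap_right :
    Nat.card {a : Fin 3 → G // a 0 * a 1 * a 2 = a 0 * a 2 * a 1} =
      Nat.card (ConjClasses G) * Nat.card G * Nat.card G :=
  card_subtype_eq_of_iff_commute (fun a => ((a 1, a 2), a 0)) (fun p => ![p.2, p.1.1, p.1.2])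
    (fun a => by funext i; fin_cases i <;> rfl) (fun _ => rfl)
    fun a => by simp [mul_assoc, Commute, SemiconjBy]

theorem card_mul_mul_eq_swap_left :
    Nat.card {a : Fin 3 → G // a 0 * a 1 * a 2 = a 1 * a 0 * a 2} =
      Nat.card (ConjClasses G) * Nat.card G * Nat.card G :=
  card_subtype_eq_of_iff_commute (fun a => ((a 0, a 1), a 2)) (fun p => ![p.1.1, p.1.2, p.2])
    (fun a => by funext i; fin_cases i <;> rfl) (fun _ => rfl)
    fun a => by simp [Commute, SemiconjBy]

theorem card_mul_mul_eq_rotate_left :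
    Nat.card {a : Fin 3 → G // a 0 * a 1 * a 2 = a 1 * a 2 * a 0} =
      Nat.card (ConjClasses G) * Nat.card G * Nat.card G :=
  card_subtype_eq_of_iff_commute (fun a => ((a 0, a 1 * a 2), a 1))
    (fun p => ![p.1.1, p.2, p.2⁻¹ * p.1.2])
    (fun a => by funext i; fin_cases i <;> simp) (fun _ => by simp)
    fun a => by simp [mul_assoc, Commute, SemiconjBy]

theorem card_mul_mul_eq_rotate_right :
    Nat.card {a : Fin 3 → G // a 0 * a 1 * a 2 = a 2 * a 0 * a 1} =
      Nat.card (ConjClasses G) * Nat.card G * Nat.card G :=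
  card_subtype_eq_of_iff_commute (fun a => ((a 0 * a 1, a 2), a 0))
    (fun p => ![p.2, p.2⁻¹ * p.1.1, p.1.2])
    (fun a => by funext i; fin_cases i <;> simp) (fun _ => by simp)
    fun a => by simp [mul_assoc, Commute, SemiconjBy]

theorem card_mul_mul_eq_reverse :
    Nat.card {a : Fin 3 → G // a 0 * a 1 * a 2 = a 2 * a 1 * a 0} =
      Nat.card (ConjClasses G) * Nat.card G * Nat.card G :=
  card_subtype_eq_of_iff_commute (fun a => ((a 0 * a 1, a 2 * (a 0)⁻¹), a 0))
    (fun p => ![p.2, p.2⁻¹ * p.1.1, p.1.2 * p.2])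
    (fun a => by funext i; fin_cases i <;> simp) (fun _ => by simp)
    fun a => by
      rw [Commute, SemiconjBy, ← mul_inv_eq_iff_eq_mul, mul_assoc, mul_assoc, mul_assoc,
        inv_mul_cancel_left]

end CommutingTriples

theorem stmt4_general {G : Type*} [Group G] (π : Equiv.Perm (Fin 3)) (hπ : π ≠ 1) :
    (Nat.card {a : Fin 3 → G // a 0 * a 1 * a 2 = a (π 0) * a (π 1) * a (π 2)} : ℚ) /
        (Nat.card G) ^ 3 =
      (Nat.card (ConjClasses G) : ℚ) / Nat.card G := by
  have hcard : Nat.card {a : Fin 3 → G // a 0 * a 1 * a 2 = a (π 0) * a (π 1) * a (π 2)} =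
      Nat.card (ConjClasses G) * Nat.card G * Nat.card G := by
    rcases Fin.perm_three_ne_one_cases π hπ with h | h | h | h | h <;>
      simp only [h.1, h.2.1, h.2.2]
    exacts [card_mul_mul_eq_swap_right, card_mul_mul_eq_swap_left, card_mul_mul_eq_rotate_left,
      card_mul_mul_eq_rotate_right, card_mul_mul_eq_reverse]
  rw [hcard]
  push_cast
  rcases eq_or_ne (Nat.card G : ℚ) 0 with hG | hG
  · simp [hG]
  · field_simp

theorem stmt4 {G : Type*} [Group G] [Fintype G] (π : Equiv.Perm (Fin 3)) (hπ : π ≠ 1) :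
    (Nat.card {a : Fin 3 → G // a 0 * a 1 * a 2 = a (π 0) * a (π 1) * a (π 2)} : ℚ) /
        (Nat.card G) ^ 3 =
      (Nat.card (ConjClasses G) : ℚ) / Nat.card G :=
  stmt4_general π hπ
end

section
/- Let G be a finite group and let π be a permutation of {1,...,4} with π(1)=1 and π not the identity. Then the probability that a_1 a_2 a_3 a_4 = a_{π(1)} a_{π(2)} a_{π(3)} a_{π(4)} for uniformly random a_i in G equals k(G)/|G|. -/
/-!
Cancelling `a 0`, each of the five admissible `π` turns the equation into a word identity in
`a 1, a 2, a 3` that, after an invertible change of variables of the triple, says that two of the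
new variables commute; e.g. `x y z = z y x` iff `x y` commutes with `z y`. Hence the number of
solutions is `|G|²` times the number of commuting pairs, which is `k(G) |G|`.
-/

def finFourEquivTripleProd (α : Type*) : (Fin 4 → α) ≃ (α × α × α) × α where
  toFun a := ((a 1, a 2, a 3), a 0)
  invFun t := ![t.2, t.1.1, t.1.2.1, t.1.2.2]
  left_inv a := by ext i; fin_cases i <;> rfl
  right_inv _ := rfl

section

variable {G : Type*} [Group G]

theorem card_commute_fst_snd_triple :
    Nat.card {t : G × G × G // Commute t.1 t.2.1} =
      Nat.card (ConjClasses G) * Nat.card G ^ 2 := by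
  have e : {t : G × G × G // Commute t.1 t.2.1} ≃ {p : G × G // Commute p.1 p.2} × G :=
    ((Equiv.prodAssoc G G G).symm.subtypeEquiv fun _ => Iff.rfl).trans
      (Equiv.prodSubtypeFstEquivSubtypeProd (β := G) (p := fun p : G × G => Commute p.1 p.2))
  rw [Nat.card_congr e, Nat.card_prod, card_comm_eq_card_conjClasses_mul_card, sq, mul_assoc]

theorem card_quadruple_of_iff_commute {P : (Fin 4 → G) → Prop} (e : G × G × G ≃ G × G × G)
    (hP : ∀ a, P a ↔ Commute (e (a 1, a 2, a 3)).1 (e (a 1, a 2, a 3)).2.1) :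
    Nat.card {a // P a} = Nat.card (ConjClasses G) * Nat.card G ^ 3 := by
  have e' : {a // P a} ≃ {t : G × G × G // Commute t.1 t.2.1} × G :=
    (((finFourEquivTripleProd G).trans (e.prodCongr (Equiv.refl G))).subtypeEquiv hP).trans
      Equiv.prodSubtypeFstEquivSubtypeProd
  rw [Nat.card_congr e', Nat.card_prod, card_commute_fst_snd_triple]
  ring

theorem card_mul_eq_mul_swap_one_two :
    Nat.card {a : Fin 4 → G // a 0 * a 1 * a 2 * a 3 = a 0 * a 2 * a 1 * a 3} =
      Nat.card (ConjClasses G) * Nat.card G ^ 3 :=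
  card_quadruple_of_iff_commute (Equiv.refl _) fun a => by
    simp only [Equiv.refl_apply, commute_iff_eq, mul_assoc, mul_right_inj]
    simp only [← mul_assoc, mul_left_inj]

theorem card_mul_eq_mul_swap_two_three :
    Nat.card {a : Fin 4 → G // a 0 * a 1 * a 2 * a 3 = a 0 * a 1 * a 3 * a 2} =
      Nat.card (ConjClasses G) * Nat.card G ^ 3 :=
  card_quadruple_of_iff_commute ((Equiv.prodComm _ _).trans (Equiv.prodAssoc _ _ _)) fun a => by
    simp only [Equiv.trans_apply, Equiv.prodComm_apply, Equiv.prodAssoc_apply, Prod.fst_swap,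
      Prod.snd_swap, commute_iff_eq, mul_assoc, mul_right_inj]

theorem card_mul_eq_mul_swap_one_three :
    Nat.card {a : Fin 4 → G // a 0 * a 1 * a 2 * a 3 = a 0 * a 3 * a 2 * a 1} =
      Nat.card (ConjClasses G) * Nat.card G ^ 3 :=
  card_quadruple_of_iff_commute
    { toFun t := (t.1 * t.2.1, t.2.2 * t.2.1, t.2.1)
      invFun t := (t.1 * t.2.2⁻¹, t.2.2, t.2.1 * t.2.2⁻¹)
      left_inv _ := by simp
      right_inv _ := by simp }
    fun a => by
      simp only [Equiv.coe_fn_mk, commute_iff_eq, mul_assoc, mul_right_inj]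
      simp only [← mul_assoc, mul_left_inj]

theorem card_mul_eq_mul_cycle_one_two_three :
    Nat.card {a : Fin 4 → G // a 0 * a 1 * a 2 * a 3 = a 0 * a 2 * a 3 * a 1} =
      Nat.card (ConjClasses G) * Nat.card G ^ 3 :=
  card_quadruple_of_iff_commute
    { toFun t := (t.1, t.2.1 * t.2.2, t.2.1)
      invFun t := (t.1, t.2.2, t.2.2⁻¹ * t.2.1)
      left_inv _ := by simp
      right_inv _ := by simp }
    fun a => by simp only [Equiv.coe_fn_mk, commute_iff_eq, mul_assoc, mul_right_inj]

theorem card_mul_eq_mul_cycle_one_three_two :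
    Nat.card {a : Fin 4 → G // a 0 * a 1 * a 2 * a 3 = a 0 * a 3 * a 1 * a 2} =
      Nat.card (ConjClasses G) * Nat.card G ^ 3 :=
  card_quadruple_of_iff_commute
    { toFun t := (t.1 * t.2.1, t.2.2, t.2.1)
      invFun t := (t.1 * t.2.2⁻¹, t.2.2, t.2.1)
      left_inv _ := by simp
      right_inv _ := by simp }
    fun a => by simp only [Equiv.coe_fn_mk, commute_iff_eq, mul_assoc, mul_right_inj]

end

theorem Equiv.Perm.fin_four_cases_of_apply_zero (σ : Equiv.Perm (Fin 4)) (h0 : σ 0 = 0)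
    (hσ : σ ≠ 1) :
    σ 1 = 2 ∧ σ 2 = 1 ∧ σ 3 = 3 ∨ σ 1 = 1 ∧ σ 2 = 3 ∧ σ 3 = 2 ∨
      σ 1 = 3 ∧ σ 2 = 2 ∧ σ 3 = 1 ∨ σ 1 = 2 ∧ σ 2 = 3 ∧ σ 3 = 1 ∨
      σ 1 = 3 ∧ σ 2 = 1 ∧ σ 3 = 2 := by
  revert σ
  decide

theorem stmt6 {G : Type*} [Group G] [Fintype G] (π : Equiv.Perm (Fin 4))
    (h1 : π 0 = 0) (hπ : π ≠ 1) :
    (Nat.card {a : Fin 4 → G //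
        a 0 * a 1 * a 2 * a 3 = a (π 0) * a (π 1) * a (π 2) * a (π 3)} : ℚ) /
        (Nat.card G) ^ 4 =
      (Nat.card (ConjClasses G) : ℚ) / Nat.card G := by
  have hcard : Nat.card {a : Fin 4 → G //
      a 0 * a 1 * a 2 * a 3 = a (π 0) * a (π 1) * a (π 2) * a (π 3)} =
        Nat.card (ConjClasses G) * Nat.card G ^ 3 := by
    rcases π.fin_four_cases_of_apply_zero h1 hπ with
      ⟨h2, h3, h4⟩ | ⟨h2, h3, h4⟩ | ⟨h2, h3, h4⟩ | ⟨h2, h3, h4⟩ | ⟨h2, h3, h4⟩ <;>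
      simp only [h1, h2, h3, h4]
    exacts [card_mul_eq_mul_swap_one_two, card_mul_eq_mul_swap_two_three,
      card_mul_eq_mul_swap_one_three, card_mul_eq_mul_cycle_one_two_three,
      card_mul_eq_mul_cycle_one_three_two]
  have hG : (Nat.card G : ℚ) ≠ 0 := Nat.cast_ne_zero.mpr Nat.card_pos.ne'
  rw [hcard]
  push_cast
  field_simp
end

section
/- Let G be a finite group. The number of ordered 4-tuples (a_1,a_2,a_3,a_4) in G^4 with a_1a_2a_3a_4 = a_2a_1a_4a_3 equals the number of ordered 4-tuples with a_1a_2a_3a_4 = a_4a_3a_2a_1. -/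
/-!
Both equations become the equation `⁅g, h⁆ = ⁅k, l⁆` in the commutators after an invertible
change of variables: `a₀a₁a₂a₃ = a₁a₀a₃a₂` says `⁅a₀⁻¹, a₁⁻¹⁆ = ⁅a₃, a₂⁆`, and `b₀b₁b₂b₃ = b₃b₂b₁b₀`
says `⁅b₃, b₀⁻¹b₃⁆ = ⁅b₂⁻¹b₁⁻¹, b₀⁻¹b₃b₁⁻¹⁆`. So both sets of solutions are in bijection with
the set of solutions of the commutator equation.
-/

open scoped commutatorElement

section CommutatorEquation

variable {G : Type*} [Group G]

theorem mul_mul_mul_eq_swap_iff_commutatorElement_eq (a b c d : G) :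
    a * b * c * d = b * a * d * c ↔ ⁅a⁻¹, b⁻¹⁆ = ⁅d, c⁆ := by
  rw [← mul_left_cancel_iff (a := b * a) (b := ⁅a⁻¹, b⁻¹⁆),
    ← mul_right_cancel_iff (a := c * d) (b := b * a * ⁅a⁻¹, b⁻¹⁆)]
  simp only [commutatorElement_def]
  group

theorem mul_mul_mul_eq_reverse_iff_commutatorElement_eq (a b c d : G) :
    a * b * c * d = d * c * b * a ↔ ⁅d, a⁻¹ * d⁆ = ⁅c⁻¹ * b⁻¹, a⁻¹ * d * b⁻¹⁆ := by
  rw [← mul_left_cancel_iff (a := a * b * c) (b := ⁅d, a⁻¹ * d⁆),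
    ← mul_right_cancel_iff (a := a⁻¹ * d * a) (b := a * b * c * ⁅d, a⁻¹ * d⁆)]
  simp only [commutatorElement_def]
  group

variable (G)

def swapReparam : Equiv.Perm (Fin 4 → G) :=
  Function.Involutive.toPerm (fun a => ![(a 0)⁻¹, (a 1)⁻¹, a 3, a 2]) fun a => by
    funext i
    fin_cases i <;> simp

def reverseReparam : (Fin 4 → G) ≃ (Fin 4 → G) where
  toFun b := ![b 3, (b 0)⁻¹ * b 3, (b 2)⁻¹ * (b 1)⁻¹, (b 0)⁻¹ * b 3 * (b 1)⁻¹]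
  invFun x := ![x 0 * (x 1)⁻¹, (x 3)⁻¹ * x 1, (x 1)⁻¹ * x 3 * (x 2)⁻¹, x 0]
  left_inv b := by
    funext i
    fin_cases i <;> simp [mul_assoc]
  right_inv x := by
    funext i
    fin_cases i <;> simp [mul_assoc]

def swapSolutionsEquivCommutatorSolutions :
    {a : Fin 4 → G // a 0 * a 1 * a 2 * a 3 = a 1 * a 0 * a 3 * a 2} ≃
      {x : Fin 4 → G // ⁅x 0, x 1⁆ = ⁅x 2, x 3⁆} :=
  (swapReparam G).subtypeEquiv fun _ => mul_mul_mul_eq_swap_iff_commutatorElement_eq _ _ _ _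

def reverseSolutionsEquivCommutatorSolutions :
    {a : Fin 4 → G // a 0 * a 1 * a 2 * a 3 = a 3 * a 2 * a 1 * a 0} ≃
      {x : Fin 4 → G // ⁅x 0, x 1⁆ = ⁅x 2, x 3⁆} :=
  (reverseReparam G).subtypeEquiv fun _ => mul_mul_mul_eq_reverse_iff_commutatorElement_eq _ _ _ _

end CommutatorEquation

theorem stmt7_general {G : Type*} [Group G] :
    Nat.card {a : Fin 4 → G // a 0 * a 1 * a 2 * a 3 = a 1 * a 0 * a 3 * a 2} =
    Nat.card {a : Fin 4 → G // a 0 * a 1 * a 2 * a 3 = a 3 * a 2 * a 1 * a 0} :=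
  Nat.card_congr
    ((swapSolutionsEquivCommutatorSolutions G).trans
      (reverseSolutionsEquivCommutatorSolutions G).symm)

theorem stmt7 {G : Type*} [Group G] [Fintype G] :
    Nat.card {a : Fin 4 → G // a 0 * a 1 * a 2 * a 3 = a 1 * a 0 * a 3 * a 2} =
    Nat.card {a : Fin 4 → G // a 0 * a 1 * a 2 * a 3 = a 3 * a 2 * a 1 * a 0} :=
  stmt7_general
end

section
/- Let G be a finite group. The number of ordered 4-tuples (a_1,a_2,a_3,a_4) in G^4 with a_1a_2a_3a_4 = a_4a_3a_2a_1 equals the sum over all ordered pairs (x,y) in G^2 of the number of ordered pairs (g,h) in G^2 satisfying g^{-1}xg · h^{-1}yh = xy. -/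
/-!
Substitute x = a₀a₁, y = a₂a₃, g = a₀, h = a₂a₁a₀, an invertible change of variables on G⁴.
Then g⁻¹xg = a₁a₀ and h⁻¹yh = (a₁a₀)⁻¹ · a₃a₂a₁a₀, so g⁻¹xg · h⁻¹yh = xy says exactly
a₃a₂a₁a₀ = a₀a₁a₂a₃. Counting the solutions (x, y, g, h) fibrewise over (x, y) gives the sum.
-/

theorem sum_sum_natCard_subtype {α β γ : Type*} [Fintype α] [Fintype β] [Finite γ]
    (P : α → β → γ → Prop) :
    ∑ x, ∑ y, Nat.card {z // P x y z} = Nat.card {q : α × β × γ // P q.1 q.2.1 q.2.2} := by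
  rw [Nat.card_congr (Equiv.subtypeProdEquivSigmaSubtype fun x (r : β × γ) ↦ P x r.1 r.2),
    Nat.card_sigma]
  refine Finset.sum_congr rfl fun x _ ↦ ?_
  rw [Nat.card_congr (Equiv.subtypeProdEquivSigmaSubtype (P x)), Nat.card_sigma]

section

variable {G : Type*} [Group G]

theorem conj_mul_conj_eq_mul_iff (a b c d : G) :
    a⁻¹ * (a * b) * a * ((c * b * a)⁻¹ * (c * d) * (c * b * a)) = a * b * (c * d) ↔
      a * b * c * d = d * c * b * a := by
  have hlhs : a⁻¹ * (a * b) * a * ((c * b * a)⁻¹ * (c * d) * (c * b * a)) = d * c * b * a := by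
    group
  rw [hlhs, eq_comm, ← mul_assoc]

def quadEquivConjCoords : (Fin 4 → G) ≃ G × G × (G × G) where
  toFun a := (a 0 * a 1, a 2 * a 3, a 0, a 2 * a 1 * a 0)
  invFun
    | (x, y, g, h) => ![g, g⁻¹ * x, h * g⁻¹ * x⁻¹ * g, g⁻¹ * x * g * h⁻¹ * y]
  left_inv a := by
    funext i
    fin_cases i <;> simp
  right_inv := by
    rintro ⟨x, y, g, h⟩
    ext <;> simp [mul_assoc]

end

theorem stmt8 {G : Type*} [Group G] [Fintype G] :
    Nat.card {a : Fin 4 → G // a 0 * a 1 * a 2 * a 3 = a 3 * a 2 * a 1 * a 0} =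
    ∑ x : G, ∑ y : G,
      Nat.card {p : G × G // p.1⁻¹ * x * p.1 * (p.2⁻¹ * y * p.2) = x * y} := by
  rw [sum_sum_natCard_subtype fun x y (p : G × G) ↦ p.1⁻¹ * x * p.1 * (p.2⁻¹ * y * p.2) = x * y]
  exact Nat.card_congr <| quadEquivConjCoords.subtypeEquiv fun a ↦
    (conj_mul_conj_eq_mul_iff (a 0) (a 1) (a 2) (a 3)).symm
end

section
/- Let G be a finite group. The number of ordered 4-tuples (a_1,a_2,a_3,a_4) in G^4 with a_1a_2a_3a_4 = a_3a_1a_4a_2 equals the number of ordered 4-tuples (t_1,t_2,t_3,t_4) in G^4 with t_1t_2t_3t_4 = t_4t_3t_2t_1. -/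
/-!
Both conditions say that a word in the free group on four letters `x₀, …, x₃` evaluates to `1`.
The number of solutions in `G` of such a word equation does not change when the word is replaced
by a conjugate, or by its image under an automorphism of the free group. The automorphism
`x₀ ↦ x₀, x₁ ↦ (x₀x₁x₂)⁻¹, x₂ ↦ x₂, x₃ ↦ x₀x₃` sends the relator of `t₀t₁t₂t₃ = t₃t₂t₁t₀` to a
conjugate of the relator of `a₀a₁a₂a₃ = a₂a₀a₃a₁`.
-/

namespace FreeGroup

variable {ι G : Type*} [Group G]

theorem card_lift_eq_one_congr_isConj {w w' : FreeGroup ι} (h : IsConj w w') :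
    Nat.card {a : ι → G // lift a w = 1} = Nat.card {a : ι → G // lift a w' = 1} := by
  obtain ⟨c, rfl⟩ := isConj_iff.mp h
  exact Nat.card_congr <| Equiv.subtypeEquivRight fun a => by simp

theorem card_lift_eq_one_map_mulEquiv (φ : FreeGroup ι ≃* FreeGroup ι) (w : FreeGroup ι) :
    Nat.card {a : ι → G // lift a (φ w) = 1} = Nat.card {a : ι → G // lift a w = 1} :=
  Nat.card_congr <|
    (lift.trans (MulEquiv.monoidHomCongrLeftEquiv φ.symm) |>.trans lift.symm).subtypeEquiv
      fun a => by simp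

theorem lift_mul_inv_eq_one_iff (a : ι → G) (u v : FreeGroup ι) :
    lift a (u * v⁻¹) = 1 ↔ lift a u = lift a v := by
  simp [mul_inv_eq_one]

end FreeGroup

open FreeGroup

def shuffleRelator : FreeGroup (Fin 4) :=
  of 0 * of 1 * of 2 * of 3 * (of 2 * of 0 * of 3 * of 1)⁻¹

def reversalRelator : FreeGroup (Fin 4) :=
  of 3 * of 2 * of 1 * of 0 * (of 0 * of 1 * of 2 * of 3)⁻¹

def reversalSubstitution : FreeGroup (Fin 4) ≃* FreeGroup (Fin 4) :=
  MonoidHom.toMulEquiv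
    (lift ![of 0, (of 0 * of 1 * of 2)⁻¹, of 2, of 0 * of 3])
    (lift ![of 0, (of 2 * of 1 * of 0)⁻¹, of 2, (of 0)⁻¹ * of 3])
    (by ext i; fin_cases i <;> simp)
    (by ext i; fin_cases i <;> simp)

theorem isConj_reversalSubstitution_reversalRelator :
    IsConj (reversalSubstitution reversalRelator) shuffleRelator := by
  refine isConj_iff.mpr ⟨of 0 * of 1 * of 2 * (of 0)⁻¹, ?_⟩
  simp [reversalSubstitution, reversalRelator, shuffleRelator]
  group

theorem stmt9_general {G : Type*} [Group G] :
    Nat.card {a : Fin 4 → G // a 0 * a 1 * a 2 * a 3 = a 2 * a 0 * a 3 * a 1} =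
    Nat.card {t : Fin 4 → G // t 0 * t 1 * t 2 * t 3 = t 3 * t 2 * t 1 * t 0} := by
  calc _ = Nat.card {a : Fin 4 → G // lift a shuffleRelator = 1} :=
        Nat.card_congr <| Equiv.subtypeEquivRight fun a => by
          rw [shuffleRelator, lift_mul_inv_eq_one_iff]
          simp
    _ = Nat.card {a : Fin 4 → G // lift a (reversalSubstitution reversalRelator) = 1} :=
        (card_lift_eq_one_congr_isConj isConj_reversalSubstitution_reversalRelator).symm
    _ = Nat.card {t : Fin 4 → G // lift t reversalRelator = 1} :=
        card_lift_eq_one_map_mulEquiv _ _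
    _ = _ :=
        Nat.card_congr <| Equiv.subtypeEquivRight fun t => by
          rw [reversalRelator, lift_mul_inv_eq_one_iff, eq_comm]
          simp

theorem stmt9 {G : Type*} [Group G] [Fintype G] :
    Nat.card {a : Fin 4 → G // a 0 * a 1 * a 2 * a 3 = a 2 * a 0 * a 3 * a 1} =
    Nat.card {t : Fin 4 → G // t 0 * t 1 * t 2 * t 3 = t 3 * t 2 * t 1 * t 0} :=
  stmt9_general
end

section
/- Let G be a finite group. The number of ordered 4-tuples (a_1,a_2,a_3,a_4) in G^4 with a_1a_2a_3a_4 = a_2a_4a_1a_3 equals the number of ordered 4-tuples (t_1,t_2,t_3,t_4) in G^4 with t_1t_2t_3t_4 = t_4t_3t_2t_1. -/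
/-! Substituting `a₀ = t₁ t₀` and `a₃ = t₃ t₂` turns `a₀ a₁ a₂ a₃ = a₁ a₃ a₀ a₂` into
`t₁ (t₀ t₁ t₂ t₃) t₂ = t₁ (t₃ t₂ t₁ t₀) t₂`, which is `t₀ t₁ t₂ t₃ = t₃ t₂ t₁ t₀` after cancelling
`t₁` on the left and `t₂` on the right. The substitution is a bijection of `G⁴`. -/

section

variable {G : Type*} [Group G]

lemma mul_mul_mul_eq_reverse_iff (a b c d : G) :
    b * a * b * c * (d * c) = b * (d * c) * (b * a) * c ↔ a * b * c * d = d * c * b * a := by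
  have hl : b * a * b * c * (d * c) = b * (a * b * c * d) * c := by group
  have hr : b * (d * c) * (b * a) * c = b * (d * c * b * a) * c := by group
  rw [hl, hr, mul_right_cancel_iff, mul_left_cancel_iff]

def substituteFirstLast : (Fin 4 → G) ≃ (Fin 4 → G) where
  toFun t := ![t 1 * t 0, t 1, t 2, t 3 * t 2]
  invFun a := ![(a 1)⁻¹ * a 0, a 1, a 2, a 3 * (a 2)⁻¹]
  left_inv t := by ext i; fin_cases i <;> simp
  right_inv a := by ext i; fin_cases i <;> simp

lemma substituteFirstLast_apply_eq_iff (t : Fin 4 → G) :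
    (let a := substituteFirstLast t; a 0 * a 1 * a 2 * a 3 = a 1 * a 3 * a 0 * a 2) ↔
      t 0 * t 1 * t 2 * t 3 = t 3 * t 2 * t 1 * t 0 :=
  mul_mul_mul_eq_reverse_iff (t 0) (t 1) (t 2) (t 3)

end

theorem stmt10_general {G : Type*} [Group G] :
    Nat.card {a : Fin 4 → G // a 0 * a 1 * a 2 * a 3 = a 1 * a 3 * a 0 * a 2} =
    Nat.card {t : Fin 4 → G // t 0 * t 1 * t 2 * t 3 = t 3 * t 2 * t 1 * t 0} :=
  Nat.card_congr (substituteFirstLast.subtypeEquiv fun t =>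
    (substituteFirstLast_apply_eq_iff t).symm).symm

theorem stmt10 {G : Type*} [Group G] [Fintype G] :
    Nat.card {a : Fin 4 → G // a 0 * a 1 * a 2 * a 3 = a 1 * a 3 * a 0 * a 2} =
    Nat.card {t : Fin 4 → G // t 0 * t 1 * t 2 * t 3 = t 3 * t 2 * t 1 * t 0} :=
  stmt10_general
end

section
/- Let G be a finite group. The number of ordered 4-tuples (a_1,a_2,a_3,a_4) in G^4 with a_1a_2a_3a_4 = a_3a_2a_4a_1 equals the number of ordered 4-tuples with a_1a_2a_3a_4 = a_4a_3a_2a_1. -/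
/-! Replacing `a₀` by `a₃ a₀` is a bijection of `G⁴`, and it turns the relation
`a₀ a₁ a₂ a₃ = a₃ a₂ a₁ a₀` into `a₃ a₀ a₁ a₂ a₃ = a₃ a₂ a₁ a₃ a₀`, which after cancelling `a₃` on
the left is `a₀ a₁ a₂ a₃ = a₂ a₁ a₃ a₀`. -/

open Function

def Pi.mulLeftShear {ι G : Type*} [DecidableEq ι] [Group G] {i j : ι} (hij : i ≠ j) :
    (ι → G) ≃ (ι → G) where
  toFun a := update a i (a j * a i)
  invFun a := update a i ((a j)⁻¹ * a i)
  left_inv a := by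
    ext k
    rcases eq_or_ne k i with rfl | hk <;> simp [*, hij.symm]
  right_inv a := by
    ext k
    rcases eq_or_ne k i with rfl | hk <;> simp [*, hij.symm]

theorem Pi.mulLeftShear_apply {ι G : Type*} [DecidableEq ι] [Group G] {i j : ι} (hij : i ≠ j)
    (a : ι → G) : Pi.mulLeftShear hij a = update a i (a j * a i) :=
  rfl

theorem stmt11_general {G : Type*} [Group G] :
    Nat.card {a : Fin 4 → G // a 0 * a 1 * a 2 * a 3 = a 2 * a 1 * a 3 * a 0} =
    Nat.card {a : Fin 4 → G // a 0 * a 1 * a 2 * a 3 = a 3 * a 2 * a 1 * a 0} := by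
  refine Nat.card_congr (Equiv.subtypeEquiv (Pi.mulLeftShear (by decide : (0 : Fin 4) ≠ 3)) ?_)
  intro a
  simp only [Pi.mulLeftShear_apply, update_self, ne_eq, Fin.reduceEq, not_false_eq_true,
    update_of_ne, mul_assoc, mul_right_inj]

theorem stmt11 {G : Type*} [Group G] [Fintype G] :
    Nat.card {a : Fin 4 → G // a 0 * a 1 * a 2 * a 3 = a 2 * a 1 * a 3 * a 0} =
    Nat.card {a : Fin 4 → G // a 0 * a 1 * a 2 * a 3 = a 3 * a 2 * a 1 * a 0} :=
  stmt11_general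
end

section
/- Let G be the dihedral group of order 8 (or the quaternion group of order 8). Then the probability that a_1a_2a_3a_4 = a_4a_3a_2a_1 for uniformly random a_i in G equals 17/32. -/
/-!
Splitting off `a 0 = g`, the solutions are counted fibrewise over `g`. In both groups the fibre
over `g` has `320` elements if `g` is central and `256` otherwise, and the centre has order `2`,
so there are `2 · 320 + 6 · 256 = 2176 = 17/32 · 8^4` solutions.
-/

open Finset

section
variable {G : Type*} [Group G]

abbrev ReversalFiber (g : G) : Type _ :=
  {p : G × G × G // g * p.1 * p.2.1 * p.2.2 = p.2.2 * p.2.1 * p.1 * g}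

def reversalFourEquivSigma :
    {a : Fin 4 → G // a 0 * a 1 * a 2 * a 3 = a 3 * a 2 * a 1 * a 0} ≃
      (g : G) × ReversalFiber g where
  toFun a := ⟨a.1 0, (a.1 1, a.1 2, a.1 3), a.2⟩
  invFun p := ⟨![p.1, p.2.1.1, p.2.1.2.1, p.2.1.2.2], p.2.2⟩
  left_inv a := by
    ext i
    fin_cases i <;> rfl
  right_inv _ := rfl

theorem card_reversal_four_of_card_reversalFiber [Fintype G] [DecidableEq G] {x y : ℕ}
    (h : ∀ g : G, Nat.card (ReversalFiber g) = if g ∈ Subgroup.center G then x else y) :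
    Nat.card {a : Fin 4 → G // a 0 * a 1 * a 2 * a 3 = a 3 * a 2 * a 1 * a 0} =
      Nat.card (Subgroup.center G) * x + (Nat.card G - Nat.card (Subgroup.center G)) * y := by
  rw [Nat.card_congr reversalFourEquivSigma, Nat.card_sigma]
  simp only [h, sum_ite, sum_const, smul_eq_mul]
  have hcenter : #{g : G | g ∈ Subgroup.center G} = Nat.card (Subgroup.center G) := by
    rw [Nat.card_eq_fintype_card, Fintype.card_subtype]
  have hcompl : #{g : G | g ∉ Subgroup.center G} = Nat.card G - Nat.card (Subgroup.center G) := by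
    rw [← hcenter, Nat.card_eq_fintype_card, ← card_univ,
      ← card_filter_add_card_filter_not (s := univ) (· ∈ Subgroup.center G),
      Nat.add_sub_cancel_left]
  rw [hcenter, hcompl]

end

set_option maxRecDepth 10000 in
theorem DihedralGroup.card_reversalFiber (g : DihedralGroup 4) :
    Nat.card (ReversalFiber g) = if g ∈ Subgroup.center (DihedralGroup 4) then 320 else 256 := by
  rw [Nat.card_eq_fintype_card]
  revert g
  decide

theorem DihedralGroup.card_center_four : Nat.card (Subgroup.center (DihedralGroup 4)) = 2 := by
  rw [Nat.card_eq_fintype_card]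
  decide

set_option maxRecDepth 10000 in
theorem QuaternionGroup.card_reversalFiber (g : QuaternionGroup 2) :
    Nat.card (ReversalFiber g) = if g ∈ Subgroup.center (QuaternionGroup 2) then 320 else 256 := by
  rw [Nat.card_eq_fintype_card]
  revert g
  decide

theorem QuaternionGroup.card_center_two : Nat.card (Subgroup.center (QuaternionGroup 2)) = 2 := by
  rw [Nat.card_eq_fintype_card]
  decide

theorem stmt12 :
    (Nat.card {a : Fin 4 → DihedralGroup 4 //
        a 0 * a 1 * a 2 * a 3 = a 3 * a 2 * a 1 * a 0} : ℚ) / 8 ^ 4 = 17 / 32 ∧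
    (Nat.card {a : Fin 4 → QuaternionGroup 2 //
        a 0 * a 1 * a 2 * a 3 = a 3 * a 2 * a 1 * a 0} : ℚ) / 8 ^ 4 = 17 / 32 := by
  rw [card_reversal_four_of_card_reversalFiber DihedralGroup.card_reversalFiber,
    card_reversal_four_of_card_reversalFiber QuaternionGroup.card_reversalFiber,
    DihedralGroup.card_center_four, QuaternionGroup.card_center_two, DihedralGroup.nat_card,
    Nat.card_eq_fintype_card (α := QuaternionGroup 2), QuaternionGroup.card]
  norm_num
end

section
/- Let G be a finite group. The number of ordered 2n-tuples (a_1,...,a_{2n}) in G^{2n} satisfying a_1 a_2 ⋯ a_{2n} = a_{2n} a_{2n-1} ⋯ a_1 equals the sum over all n-tuples (x_1,...,x_n) in G^n of the number of n-tuples (g_1,...,g_n) in G^n satisfying g_1^{-1}x_1g_1 · g_2^{-1}x_2g_2 ⋯ g_n^{-1}x_ng_n = x_1x_2⋯x_n. -/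
/-!
Both conditions say that a word in `G` evaluates to `1`, and each word is turned into a product
of `n` commutators by an invertible change of variables, peeling off two letters at a time:
`a₁ ⋯ a₂ₙ (a₂ₙ ⋯ a₁)⁻¹ = ⁅a₁a₂, R a₁⁻¹⁆ · a₃ ⋯ a₂ₙ (a₂ₙ ⋯ a₃)⁻¹` with `R = a₃ ⋯ a₂ₙ`, and similarly
for `(∏ xᵢ)⁻¹ ∏ gᵢ⁻¹xᵢgᵢ`. So both sets are in bijection with `{(u, v) | ⁅u₁, v₁⁆ ⋯ ⁅uₙ, vₙ⁆ = 1}`.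
-/

open scoped commutatorElement

section

variable {G : Type*} [Group G]

def commutatorProd {n : ℕ} (p : Fin n → G × G) : G :=
  (List.ofFn fun i => ⁅(p i).1, (p i).2⁆).prod

def revDefect {k : ℕ} (a : Fin k → G) : G :=
  (List.ofFn a).prod * ((List.ofFn a).reverse.prod)⁻¹

def conjDefect {n : ℕ} (p : (Fin n → G) × (Fin n → G)) : G :=
  ((List.ofFn p.1).prod)⁻¹ * (List.ofFn fun i => (p.2 i)⁻¹ * p.1 i * p.2 i).prod

@[simp]
theorem commutatorProd_cons {n : ℕ} (p : G × G) (q : Fin n → G × G) :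
    commutatorProd (Fin.cons p q : Fin (n + 1) → G × G) = ⁅p.1, p.2⁆ * commutatorProd q := by
  simp [commutatorProd, List.ofFn_succ]

theorem revDefect_cons_cons {k : ℕ} (a₀ a₁ : G) (r : Fin k → G) :
    revDefect (Fin.cons a₀ (Fin.cons a₁ r) : Fin (k + 2) → G) =
      ⁅a₀ * a₁, (List.ofFn r).prod * a₀⁻¹⁆ * revDefect r := by
  simp only [revDefect, List.ofFn_succ, Fin.cons_zero, Fin.cons_succ, List.prod_cons,
    List.reverse_cons, List.prod_append, List.prod_nil, mul_one, commutatorElement_def]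
  group

theorem conjDefect_cons {n : ℕ} (x₀ g₀ : G) (y h : Fin n → G) :
    conjDefect ((Fin.cons x₀ y, Fin.cons g₀ h) : (Fin (n + 1) → G) × (Fin (n + 1) → G)) =
      ⁅(List.ofFn y).prod⁻¹ * x₀⁻¹ * (List.ofFn y).prod,
        (List.ofFn y).prod⁻¹ * g₀⁻¹ * (List.ofFn y).prod⁆ * conjDefect (y, h) := by
  simp only [conjDefect, List.ofFn_succ, Fin.cons_zero, Fin.cons_succ, List.prod_cons,
    commutatorElement_def]
  group

theorem exists_equiv_commutatorProd_succ {α β : Type*} {m : ℕ} {f : α → G} {g : β → G}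
    (s : (G × G) × β ≃ α) (σ : β → Equiv.Perm (G × G))
    (hf : ∀ p b, f (s (p, b)) = ⁅(σ b p).1, (σ b p).2⁆ * g b)
    (e : β ≃ (Fin m → G × G)) (hg : ∀ b, g b = commutatorProd (e b)) :
    ∃ e' : α ≃ (Fin (m + 1) → G × G), ∀ a, f a = commutatorProd (e' a) := by
  refine ⟨s.symm.trans <| (Equiv.prodCongrLeft σ).trans <|
    (Equiv.prodCongr (Equiv.refl _) e).trans (Fin.consEquiv fun _ => _), ?_⟩
  rintro a
  obtain ⟨⟨p, b⟩, rfl⟩ := s.surjective a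
  simp only [hf, hg, Equiv.trans_apply, Equiv.symm_apply_apply, Equiv.prodCongrLeft_apply,
    Equiv.prodCongr_apply, Equiv.coe_refl, Prod.map_apply, id_eq]
  exact (commutatorProd_cons (σ b p) (e b)).symm

def mulPairEquiv (c : G) : Equiv.Perm (G × G) where
  toFun p := (p.1 * p.2, c * p.1⁻¹)
  invFun q := (q.2⁻¹ * c, c⁻¹ * q.2 * q.1)
  left_inv p := by ext <;> simp
  right_inv q := by ext <;> simp [mul_assoc]

theorem exists_equiv_revDefect (n : ℕ) :
    ∃ e : (Fin (2 * n) → G) ≃ (Fin n → G × G), ∀ a, revDefect a = commutatorProd (e a) := by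
  induction n with
  | zero => exact ⟨Equiv.ofUnique (Fin 0 → G) _, fun _ => by simp [revDefect, commutatorProd]⟩
  | succ m ih =>
    obtain ⟨e, he⟩ := ih
    let s : (G × G) × (Fin (2 * m) → G) ≃ (Fin (2 * (m + 1)) → G) :=
      (Equiv.prodAssoc _ _ _).trans <|
        (Equiv.prodCongr (Equiv.refl G) (Fin.consEquiv fun _ => _)).trans (Fin.consEquiv fun _ => _)
    exact exists_equiv_commutatorProd_succ s (fun r => mulPairEquiv (List.ofFn r).prod)
      (fun p r => revDefect_cons_cons p.1 p.2 r) e he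

theorem exists_equiv_conjDefect (n : ℕ) :
    ∃ e : (Fin n → G) × (Fin n → G) ≃ (Fin n → G × G),
      ∀ p, conjDefect p = commutatorProd (e p) := by
  induction n with
  | zero =>
    exact ⟨(Equiv.arrowProdEquivProdArrow _ _ _).symm,
      fun _ => by simp [conjDefect, commutatorProd]⟩
  | succ m ih =>
    obtain ⟨e, he⟩ := ih
    let s : (G × G) × ((Fin m → G) × (Fin m → G)) ≃ (Fin (m + 1) → G) × (Fin (m + 1) → G) :=
      (Equiv.prodProdProdComm _ _ _ _).trans <|
        Equiv.prodCongr (Fin.consEquiv fun _ => _) (Fin.consEquiv fun _ => _)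
    let τ (c : G) : Equiv.Perm G := (Equiv.inv G).trans (MulAut.conj c⁻¹).toEquiv
    exact exists_equiv_commutatorProd_succ s
      (fun q => Equiv.prodCongr (τ (List.ofFn q.1).prod) (τ (List.ofFn q.1).prod))
      (fun p q => (conjDefect_cons p.1 p.2 q.1 q.2).trans (by simp [τ])) e he

end

theorem stmt16_general {G : Type*} [Group G] [Fintype G] (n : ℕ) :
    Nat.card {a : Fin (2 * n) → G //
        (List.ofFn a).prod = (List.ofFn a).reverse.prod} =
    ∑ x : Fin n → G,
      Nat.card {g : Fin n → G //
        (List.ofFn fun i => (g i)⁻¹ * x i * g i).prod = (List.ofFn x).prod} := by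
  obtain ⟨e, he⟩ := exists_equiv_revDefect (G := G) n
  obtain ⟨e', he'⟩ := exists_equiv_conjDefect (G := G) n
  have hrev : Nat.card {a : Fin (2 * n) → G // (List.ofFn a).prod = (List.ofFn a).reverse.prod}
      = Nat.card {p : Fin n → G × G // commutatorProd p = 1} :=
    Nat.card_congr <| e.subtypeEquiv fun a => by rw [← he, revDefect, mul_inv_eq_one]
  have hconj : Nat.card {p : (Fin n → G) × (Fin n → G) //
        (List.ofFn fun i => (p.2 i)⁻¹ * p.1 i * p.2 i).prod = (List.ofFn p.1).prod}
      = Nat.card {p : Fin n → G × G // commutatorProd p = 1} :=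
    Nat.card_congr <| e'.subtypeEquiv fun p => by
      rw [← he', conjDefect, inv_mul_eq_one, eq_comm]
  have hfibres := Nat.card_congr (Equiv.subtypeProdEquivSigmaSubtype fun (x g : Fin n → G) =>
    (List.ofFn fun i => (g i)⁻¹ * x i * g i).prod = (List.ofFn x).prod)
  rw [Nat.card_sigma] at hfibres
  rw [hrev, ← hconj, hfibres]

theorem stmt16 {G : Type*} [Group G] [Fintype G] (n : ℕ) (hn : 0 < n) :
    Nat.card {a : Fin (2 * n) → G //
        (List.ofFn a).prod = (List.ofFn a).reverse.prod} =
    ∑ x : Fin n → G,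
      Nat.card {g : Fin n → G //
        (List.ofFn fun i => (g i)⁻¹ * x i * g i).prod = (List.ofFn x).prod} :=
  stmt16_general n
end

section
/- Let G be a finite group. For every positive integer n, the number of 2n-tuples (a_1,...,a_{2n}) in G^{2n} with a_1a_2⋯a_{2n} = a_{2n}a_{2n-1}⋯a_1 equals the number of 2n-tuples with (a_1a_2)(a_3a_4)⋯(a_{2n-1}a_{2n}) = (a_2a_1)(a_4a_3)⋯(a_{2n}a_{2n-1}). -/
/-!
Group the word into pairs `(xᵢ, yᵢ) = (a₂ᵢ₋₁, a₂ᵢ)`. With `gᵢ = (y₁x₁)⋯(yᵢ₋₁xᵢ₋₁)`, the substitution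
`(xᵢ, yᵢ) ↦ (xᵢgᵢ⁻¹, gᵢyᵢ)` is invertible, keeps every `xᵢyᵢ`, and turns `yᵢxᵢ` into `gᵢ₊₁gᵢ⁻¹`.
The reversed product of the new `yᵢxᵢ` therefore telescopes to `gₙ₊₁ = (y₁x₁)⋯(yₙxₙ)`, which
carries the solutions of the second equation bijectively onto those of the first.
-/

section Pairs

variable {α : Type*}

variable (α) in
def pairsEquiv (n : ℕ) : (Fin (2 * n) → α) ≃ (Fin n → α × α) :=
  (((finCongr (Nat.mul_comm 2 n)).trans finProdFinEquiv.symm).arrowCongr (Equiv.refl α)).trans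
    ((Equiv.curry _ _ _).trans (Equiv.piCongrRight fun _ => finTwoArrowEquiv α))

theorem pairsEquiv_apply {n : ℕ} (a : Fin (2 * n) → α) (i : Fin n) :
    pairsEquiv α n a i = (a ⟨2 * i, by omega⟩, a ⟨2 * i + 1, by omega⟩) := by
  simp [pairsEquiv, finProdFinEquiv, Equiv.arrowCongr, add_comm 1]

theorem List.prod_ofFn_two_mul [Monoid α] {n : ℕ} (a : Fin (2 * n) → α) :
    (List.ofFn a).prod =
      (List.ofFn fun i : Fin n => a ⟨2 * i, by omega⟩ * a ⟨2 * i + 1, by omega⟩).prod := by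
  rw [List.ofFn_mul', List.prod_flatten, List.map_ofFn]
  simp [Function.comp_def, List.ofFn_succ]

theorem List.prod_reverse_ofFn_two_mul [Monoid α] {n : ℕ} (a : Fin (2 * n) → α) :
    (List.ofFn a).reverse.prod =
      (List.ofFn fun i : Fin n => a ⟨2 * i + 1, by omega⟩ * a ⟨2 * i, by omega⟩).reverse.prod := by
  rw [List.ofFn_mul', List.reverse_flatten, List.prod_flatten, List.map_reverse, List.map_ofFn,
    List.map_ofFn]
  simp [Function.comp_def, List.ofFn_succ]

end Pairs

section Twist

variable {G : Type*} [Group G]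

/-- `twist g` is the substitution of the header started with `g₁ = g`. -/
def twist : {n : ℕ} → G → (Fin n → G × G) → Fin n → G × G
  | 0, _, b => b
  | _ + 1, g, b =>
      Fin.cons ((b 0).1 * g⁻¹, g * (b 0).2) (twist (g * ((b 0).2 * (b 0).1)) (Fin.tail b))

def untwist : {n : ℕ} → G → (Fin n → G × G) → Fin n → G × G
  | 0, _, b => b
  | _ + 1, g, b =>
      Fin.cons ((b 0).1 * g, g⁻¹ * (b 0).2) (untwist ((b 0).2 * (b 0).1 * g) (Fin.tail b))

theorem untwist_twist {n : ℕ} (g : G) (b : Fin n → G × G) : untwist g (twist g b) = b := by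
  induction n generalizing g with
  | zero => rfl
  | succ n ih => simp [twist, untwist, mul_assoc, ih]

theorem twist_untwist {n : ℕ} (g : G) (b : Fin n → G × G) : twist g (untwist g b) = b := by
  induction n generalizing g with
  | zero => rfl
  | succ n ih => simp [twist, untwist, mul_assoc, ih]

def twistEquiv (n : ℕ) (g : G) : (Fin n → G × G) ≃ (Fin n → G × G) :=
  ⟨twist g, untwist g, untwist_twist g, twist_untwist g⟩

theorem twist_mul_apply {n : ℕ} (g : G) (b : Fin n → G × G) (i : Fin n) :
    (twist g b i).1 * (twist g b i).2 = (b i).1 * (b i).2 := by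
  induction n generalizing g with
  | zero => exact i.elim0
  | succ n ih =>
    cases i using Fin.cases with
    | zero => simp [twist]
    | succ i => simpa [twist, Fin.tail] using ih _ (Fin.tail b) i

theorem prod_reverse_ofFn_twist {n : ℕ} (g : G) (b : Fin n → G × G) :
    (List.ofFn fun i => (twist g b i).2 * (twist g b i).1).reverse.prod =
      g * (List.ofFn fun i => (b i).2 * (b i).1).prod * g⁻¹ := by
  induction n generalizing g with
  | zero => simp
  | succ n ih => simp [List.ofFn_succ, twist, ih, Fin.tail, mul_assoc]

theorem card_prod_eq_prod_reverse_swap (n : ℕ) :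
    Nat.card {b : Fin n → G × G // (List.ofFn fun i => (b i).1 * (b i).2).prod =
        (List.ofFn fun i => (b i).2 * (b i).1).reverse.prod} =
      Nat.card {b : Fin n → G × G // (List.ofFn fun i => (b i).1 * (b i).2).prod =
        (List.ofFn fun i => (b i).2 * (b i).1).prod} := by
  refine Nat.card_congr ((twistEquiv n (1 : G)).subtypeEquiv fun b => ?_).symm
  simp [twistEquiv, twist_mul_apply, prod_reverse_ofFn_twist]

end Twist

theorem stmt17 {G : Type*} [Group G] (n : ℕ) :
    Nat.card {a : Fin (2 * n) → G //
        (List.ofFn a).prod = (List.ofFn a).reverse.prod} =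
    Nat.card {a : Fin (2 * n) → G //
        (List.ofFn fun i : Fin n =>
            a ⟨2 * i.val, by have := i.isLt; omega⟩ *
            a ⟨2 * i.val + 1, by have := i.isLt; omega⟩).prod =
        (List.ofFn fun i : Fin n =>
            a ⟨2 * i.val + 1, by have := i.isLt; omega⟩ *
            a ⟨2 * i.val, by have := i.isLt; omega⟩).prod} := by
  calc _ = Nat.card {b : Fin n → G × G // (List.ofFn fun i => (b i).1 * (b i).2).prod =
          (List.ofFn fun i => (b i).2 * (b i).1).reverse.prod} :=
        Nat.card_congr <| (pairsEquiv G n).subtypeEquiv fun a => by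
          simp [List.prod_ofFn_two_mul a, List.prod_reverse_ofFn_two_mul a, pairsEquiv_apply]
    _ = Nat.card {b : Fin n → G × G // (List.ofFn fun i => (b i).1 * (b i).2).prod =
          (List.ofFn fun i => (b i).2 * (b i).1).prod} := card_prod_eq_prod_reverse_swap n
    _ = _ := Nat.card_congr <| ((pairsEquiv G n).subtypeEquiv fun a => by
          simp [pairsEquiv_apply]).symm
end
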